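/- arXiv:1611.05319 — 3 statements merged into one kernel-verified Lean document; each statement's English description precedes it below -/
import Mathlib

section
/- Let N ≥ 1 and h = 1/N, and let D_h = {(ih, jh) : 1 ≤ i ≤ N, 1 ≤ j ≤ N} be the discretized unit square with periodic identification in the first coordinate. Fix an integer r ≥ 2 and a finite nonempty set A⁻_r of points y ∈ ℝ² with ∥y∥ ≤ r and y·e₂ ≤ -1, with positive weights w. Suppose u : (0,1]² → ℝ^d is C² with ∥Hu∥₂ ≤ D uniformly and satisfies ∇u(x)·g* = 0 where g* is the weighted center of mass of A⁻_r. Define u_h on D_h row by row (increasing j) by u_h(x) = (Σ_{y ∈ A⁻_r} w(y) u_h(x + yh)) / (Σ_{y ∈ A⁻_r} w(y)), with u_h = u on the boundary data region {j ≤ 0}. Then for all 1 ≤ i,j ≤ N, |u_h(ih,jh) − u(ih,jh)| ≤ j·D·r²·h². -/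
/-!
Write `u_h(x) - u(x)` as the weighted average over the stencil of
`(u_h - u)(x + h y) + (u(x + h y) - u(x) - ∇u(x) · h y)`: this is possible because the linear
terms average to `h ∇u(x) · g* = 0`. The first summand lies in an earlier row and is controlled
by induction, the second is a Taylor remainder of size at most `D ‖h y‖² ≤ D r² h²`, and an
average of terms of norm `≤ C` has norm `≤ C`. Hence each row adds at most `D r² h²` to the error.
-/

namespace Finset

lemma centerMass_sub_const_sub_map {R E F ι M : Type*} [Field R] [AddCommGroup E]
    [AddCommGroup F] [Module R E] [Module R F] [FunLike M E F] [LinearMapClass M R E F]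
    (t : Finset ι) {w : ι → R} (hw : ∑ i ∈ t, w i ≠ 0) (f : ι → F) (c : F) (L : M) (z : ι → E) :
    t.centerMass w (fun i => f i - c - L (z i)) = t.centerMass w f - c - L (t.centerMass w z) := by
  simp [centerMass, smul_sub, sum_sub_distrib, ← sum_smul, map_sum, map_smul, hw]

lemma norm_centerMass_le {E ι : Type*} [SeminormedAddCommGroup E] [NormedSpace ℝ E]
    (t : Finset ι) {w : ι → ℝ} (hw : ∀ i ∈ t, 0 ≤ w i) (hpos : 0 < ∑ i ∈ t, w i) {z : ι → E}
    {C : ℝ} (hz : ∀ i ∈ t, ‖z i‖ ≤ C) : ‖t.centerMass w z‖ ≤ C := by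
  simpa using (convex_closedBall (0 : E) C).centerMass_mem hw hpos (by simpa using hz)

end Finset

lemma Prod.norm_le_sqrt_sq_add_sq (y : ℝ × ℝ) : ‖y‖ ≤ √(y.1 ^ 2 + y.2 ^ 2) := by
  rw [Prod.norm_def, Real.norm_eq_abs, Real.norm_eq_abs]
  exact max_le (Real.abs_le_sqrt (by nlinarith)) (Real.abs_le_sqrt (by nlinarith))

section ErrorPropagation

variable {E F : Type*} [NormedAddCommGroup E] [NormedSpace ℝ E]
  [NormedAddCommGroup F] [NormedSpace ℝ F] {u : E → F} {D : ℝ}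

lemma norm_sub_sub_fderiv_le_of_norm_iteratedFDeriv_two_le (hu : ContDiff ℝ 2 u)
    (hD : ∀ x, ‖iteratedFDeriv ℝ 2 u x‖ ≤ D) (x v : E) :
    ‖u (x + v) - u x - fderiv ℝ u x v‖ ≤ D * ‖v‖ ^ 2 := by
  have hD0 : 0 ≤ D := (norm_nonneg _).trans (hD x)
  have hdiff : Differentiable ℝ (fderiv ℝ u) :=
    (hu.fderiv_right (m := 1) le_rfl).differentiable one_ne_zero
  have hHess : ∀ z, ‖fderiv ℝ (fderiv ℝ u) z‖ ≤ D := fun z => by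
    rw [← norm_iteratedFDeriv_one (𝕜 := ℝ), norm_iteratedFDeriv_fderiv]
    exact hD z
  have hLip : ∀ z, ‖fderiv ℝ u z - fderiv ℝ u x‖ ≤ D * ‖z - x‖ := fun z =>
    convex_univ.norm_image_sub_le_of_norm_fderiv_le (fun z _ => hdiff z)
      (fun z _ => hHess z) trivial trivial
  have hmvt := (convex_closedBall x ‖v‖).norm_image_sub_le_of_norm_fderiv_le'
    (fun z _ => (hu.differentiable two_ne_zero) z) (φ := fderiv ℝ u x)
    (fun z hz => (hLip z).trans (mul_le_mul_of_nonneg_left (mem_closedBall_iff_norm.mp hz) hD0))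
    (Metric.mem_closedBall_self (norm_nonneg v)) (y := x + v) (by simp [dist_eq_norm])
  simpa [pow_two, mul_assoc] using hmvt

variable {A : Finset E} {w : E → ℝ} {uh : E → F} {h ρ : ℝ}

lemma norm_centerMass_sub_le_of_transport (hA : A.Nonempty) (hw : ∀ y ∈ A, 0 < w y)
    (hAnorm : ∀ y ∈ A, ‖y‖ ≤ ρ) (hu : ContDiff ℝ 2 u) (hD : ∀ x, ‖iteratedFDeriv ℝ 2 u x‖ ≤ D)
    {x : E} (htransport : fderiv ℝ u x (A.centerMass w id) = 0) {C : ℝ}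
    (hprev : ∀ y ∈ A, ‖uh (x + h • y) - u (x + h • y)‖ ≤ C) :
    ‖A.centerMass w (fun y => uh (x + h • y)) - u x‖ ≤ C + D * (ρ * h) ^ 2 := by
  have hS : 0 < ∑ y ∈ A, w y := Finset.sum_pos hw hA
  have hsplit : A.centerMass w (fun y => uh (x + h • y)) - u x =
      A.centerMass w (fun y => (uh (x + h • y) - u (x + h • y)) +
        (u (x + h • y) - u x - fderiv ℝ u x (h • y))) := by
    have hlin : fderiv ℝ u x (A.centerMass w (fun y => h • y)) = 0 := by
      have hsmul := Finset.centerMass_smul (w := w) h A id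
      simp only [id_eq] at hsmul
      rw [hsmul, map_smul, htransport, smul_zero]
    rw [← sub_zero (_ - u x), ← hlin, ← A.centerMass_sub_const_sub_map hS.ne']
    congr 1
    ext y
    abel
  rw [hsplit]
  refine A.norm_centerMass_le (fun y hy => (hw y hy).le) hS fun y hy => ?_
  have hstep : ‖h • y‖ ^ 2 ≤ (ρ * h) ^ 2 := by
    rw [← sq_abs (ρ * h), norm_smul, Real.norm_eq_abs, abs_mul, mul_comm |ρ|]
    gcongr
    exact (hAnorm y hy).trans (le_abs_self ρ)
  calc _ ≤ C + D * ‖h • y‖ ^ 2 := (norm_add_le _ _).trans <| add_le_add (hprev y hy)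
          (norm_sub_sub_fderiv_le_of_norm_iteratedFDeriv_two_le hu hD x (h • y))
    _ ≤ C + D * (ρ * h) ^ 2 := by
      have := (norm_nonneg _).trans (hD x)
      gcongr

lemma norm_sub_le_of_centerMass_recursion (hA : A.Nonempty) (hw : ∀ y ∈ A, 0 < w y)
    (hAnorm : ∀ y ∈ A, ‖y‖ ≤ ρ) (ℓ : E →ₗ[ℝ] ℝ) (hAlow : ∀ y ∈ A, ℓ y ≤ -1) (hh : 0 ≤ h)
    (hu : ContDiff ℝ 2 u)
    (hD : ∀ x, ‖iteratedFDeriv ℝ 2 u x‖ ≤ D)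
    (htransport : ∀ x, fderiv ℝ u x (A.centerMass w id) = 0)
    (hbdry : ∀ x, ℓ x ≤ 0 → uh x = u x)
    (hrec : ∀ x, 0 < ℓ x → uh x = A.centerMass w (fun y => uh (x + h • y))) (j : ℕ) (x : E)
    (hx : ℓ x ≤ j * h) : ‖uh x - u x‖ ≤ j * (D * (ρ * h) ^ 2) := by
  induction j generalizing x with
  | zero => simp [hbdry x (by simpa using hx)]
  | succ j ih =>
    rcases le_or_gt (ℓ x) 0 with hx0 | hx0
    · rw [hbdry x hx0, sub_self, norm_zero]
      have := (norm_nonneg _).trans (hD x)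
      positivity
    rw [hrec x hx0, Nat.cast_succ, add_one_mul]
    refine norm_centerMass_sub_le_of_transport hA hw hAnorm hu hD (htransport x) fun y hy => ih _ ?_
    rw [map_add, map_smul, smul_eq_mul]
    push_cast at hx
    nlinarith [hAlow y hy]

end ErrorPropagation

theorem stmt_3_general (N : ℕ) (h : ℝ) (hh : h = 1 / N)
    (r : ℤ)
    (A : Finset (ℝ × ℝ)) (hA : A.Nonempty)
    (hAnorm : ∀ y ∈ A, Real.sqrt (y.1 ^ 2 + y.2 ^ 2) ≤ (r : ℝ))
    (hAlow : ∀ y ∈ A, y.2 ≤ -1)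
    (w : ℝ × ℝ → ℝ) (hw : ∀ y ∈ A, 0 < w y)
    (u : ℝ × ℝ → ℝ) (hu : ContDiff ℝ 2 u)
    (D : ℝ) (hHess : ∀ x : ℝ × ℝ, ‖iteratedFDeriv ℝ 2 u x‖ ≤ D)
    (gstar : ℝ × ℝ) (hg : gstar = (∑ y ∈ A, w y)⁻¹ • ∑ y ∈ A, w y • y)
    (htransport : ∀ x : ℝ × ℝ, fderiv ℝ u x gstar = 0)
    (uh : ℝ × ℝ → ℝ)
    (hbdry : ∀ x : ℝ × ℝ, x.2 ≤ 0 → uh x = u x)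
    (hrec : ∀ x : ℝ × ℝ, 0 < x.2 →
      uh x = (∑ y ∈ A, w y)⁻¹ * ∑ y ∈ A, w y * uh (x + h • y)) :
    ∀ i j : ℕ, 1 ≤ i → i ≤ N → 1 ≤ j → j ≤ N →
      |uh ((i : ℝ) * h, (j : ℝ) * h) - u ((i : ℝ) * h, (j : ℝ) * h)| ≤
        (j : ℝ) * D * (r : ℝ) ^ 2 * h ^ 2 := by
  intro i j _ _ _ _
  have hh0 : 0 ≤ h := hh ▸ by positivity
  have hgstar : gstar = A.centerMass w id := hg
  have key := norm_sub_le_of_centerMass_recursion hA hw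
    (fun y hy => (Prod.norm_le_sqrt_sq_add_sq y).trans (hAnorm y hy))
    (LinearMap.snd ℝ ℝ ℝ) hAlow hh0 hu hHess (hgstar ▸ htransport) hbdry hrec j
    ((i : ℝ) * h, (j : ℝ) * h) le_rfl
  rw [Real.norm_eq_abs] at key
  linarith

/-- Error propagation for the shell-based filling recursion: if `u` is `C²`
with Hessian bounded by `D` and satisfies the transport condition
`∇u · g* = 0`, where `g*` is the weighted center of mass of the stencil
`A⁻_r` (a finite set of points with `‖y‖ ≤ r` and `y·e₂ ≤ -1`), and `u_h`
is defined by the weighted-average filling recursion with boundary data `u`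
on `{y ≤ 0}`, then `|u_h(ih,jh) - u(ih,jh)| ≤ j·D·r²·h²` for `1 ≤ i,j ≤ N`. -/
theorem stmt_3 (N : ℕ) (hN : 1 ≤ N) (h : ℝ) (hh : h = 1 / N)
    (r : ℤ) (hr : 2 ≤ r)
    (A : Finset (ℝ × ℝ)) (hA : A.Nonempty)
    (hAnorm : ∀ y ∈ A, Real.sqrt (y.1 ^ 2 + y.2 ^ 2) ≤ (r : ℝ))
    (hAlow : ∀ y ∈ A, y.2 ≤ -1)
    (w : ℝ × ℝ → ℝ) (hw : ∀ y ∈ A, 0 < w y)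
    (u : ℝ × ℝ → ℝ) (hu : ContDiff ℝ 2 u)
    (D : ℝ) (hHess : ∀ x : ℝ × ℝ, ‖iteratedFDeriv ℝ 2 u x‖ ≤ D)
    (gstar : ℝ × ℝ) (hg : gstar = (∑ y ∈ A, w y)⁻¹ • ∑ y ∈ A, w y • y)
    (htransport : ∀ x : ℝ × ℝ, fderiv ℝ u x gstar = 0)
    (uh : ℝ × ℝ → ℝ)
    (hbdry : ∀ x : ℝ × ℝ, x.2 ≤ 0 → uh x = u x)
    (hrec : ∀ x : ℝ × ℝ, 0 < x.2 →
      uh x = (∑ y ∈ A, w y)⁻¹ * ∑ y ∈ A, w y * uh (x + h • y)) :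
    ∀ i j : ℕ, 1 ≤ i → i ≤ N → 1 ≤ j → j ≤ N →
      |uh ((i : ℝ) * h, (j : ℝ) * h) - u ((i : ℝ) * h, (j : ℝ) * h)| ≤
        (j : ℝ) * D * (r : ℝ) ^ 2 * h ^ 2 :=
  stmt_3_general N h hh r A hA hAnorm hAlow w hw u hu D hHess gstar hg htransport uh hbdry hrec
end

section
/- Let D_h ⊂ hℤ² be a finite set of N pixels whose outer boundary consists entirely of readable pixels, and suppose a filling algorithm removes at every iteration all pixels of D_h adjacent (in the 8-neighborhood sense) to a pixel outside the current domain. Then the algorithm empties D_h in at most ⌈√N / 2⌉ iterations. -/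
/-- The 8-point (Moore) neighborhood of a lattice point, in lattice coordinates. -/
def nbr (x : ℤ × ℤ) : Set (ℤ × ℤ) :=
  {y | y ≠ x ∧ |y.1 - x.1| ≤ 1 ∧ |y.2 - x.2| ≤ 1}

/-- One iteration of the onion-shell filling dynamics: remove every pixel of
the current domain having an 8-neighbor outside the domain. -/
def step (S : Set (ℤ × ℤ)) : Set (ℤ × ℤ) :=
  {x ∈ S | ∀ y ∈ nbr x, y ∈ S}

lemma survive_ball (k : ℕ) : ∀ (S : Set (ℤ × ℤ)) (x : ℤ × ℤ), x ∈ step^[k] S →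
    ∀ y : ℤ × ℤ, |y.1 - x.1| ≤ (k : ℤ) → |y.2 - x.2| ≤ (k : ℤ) → y ∈ S := by
  induction k with
  | zero =>
    intro S x hx y h1 h2
    have : y = x := by
      have e1 : y.1 = x.1 := by rw [abs_le] at h1; omega
      have e2 : y.2 = x.2 := by rw [abs_le] at h2; omega
      exact Prod.ext e1 e2
    simpa [this] using hx
  | succ k ih =>
    intro S x hx y h1 h2
    rw [Function.iterate_succ_apply] at hx
    set z : ℤ × ℤ := (x.1 + max (-(k : ℤ)) (min k (y.1 - x.1)),
                      x.2 + max (-(k : ℤ)) (min k (y.2 - x.2))) with hz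
    have hz1 : |z.1 - x.1| ≤ (k : ℤ) := by simp only [hz]; rw [abs_le]; omega
    have hz2 : |z.2 - x.2| ≤ (k : ℤ) := by simp only [hz]; rw [abs_le]; omega
    have hzS : z ∈ step S := ih (step S) x hx z hz1 hz2
    have hy1 : |y.1 - z.1| ≤ 1 := by
      simp only [hz]; rw [abs_le] at h1 ⊢; push_cast at h1 ⊢; omega
    have hy2 : |y.2 - z.2| ≤ 1 := by
      simp only [hz]; rw [abs_le] at h2 ⊢; push_cast at h2 ⊢; omega
    by_cases hyz : y = z
    · rw [hyz]; exact hzS.1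
    · exact hzS.2 y ⟨hyz, hy1, hy2⟩

/-- A finite inpainting domain of `N` pixels (whose outer boundary consists
entirely of readable pixels, i.e. all complement pixels may be used) is
emptied by the onion-shell dynamics in at most `⌈√N / 2⌉` iterations. -/
theorem stmt_7 (D0 : Set (ℤ × ℤ)) (hfin : D0.Finite) (N : ℕ)
    (hN : N = D0.ncard) (k : ℕ) (hk : ⌈Real.sqrt N / 2⌉₊ ≤ k) :
    step^[k] D0 = ∅ := by
  by_contra hne
  obtain ⟨x, hx⟩ := Set.nonempty_iff_ne_empty.mpr hne
  -- the Chebyshev ball of radius k around x is contained in D0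
  set B : Finset (ℤ × ℤ) := Finset.Icc (x.1 - k, x.2 - k) (x.1 + k, x.2 + k) with hB
  have hsub : (B : Set (ℤ × ℤ)) ⊆ D0 := by
    intro y hy
    simp only [hB, Finset.coe_Icc, Set.mem_Icc, Prod.le_def] at hy
    exact survive_ball k D0 x hx y (by rw [abs_le]; omega) (by rw [abs_le]; omega)
  have hcard : B.card = (2 * k + 1) * (2 * k + 1) := by
    rw [hB, Finset.Icc_prod_def, Finset.card_product, Int.card_Icc, Int.card_Icc]
    simp only [Prod.fst, Prod.snd]
    have h1 : ((x.1 + k + 1 - (x.1 - k)) : ℤ).toNat = 2 * k + 1 := by omega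
    have h2 : ((x.2 + k + 1 - (x.2 - k)) : ℤ).toNat = 2 * k + 1 := by omega
    rw [h1, h2]
  have hle : B.card ≤ N := by
    rw [hN]
    have := Set.ncard_le_ncard hsub hfin
    rwa [Set.ncard_coe_finset] at this
  -- but √N ≤ 2k forces N < (2k+1)²
  have hsqrt : Real.sqrt N ≤ 2 * k := by
    have := (Nat.ceil_le.mp hk)
    linarith [this]
  have hNle : (N : ℝ) ≤ (2 * k) ^ 2 := by
    have h0 : (0 : ℝ) ≤ Real.sqrt N := Real.sqrt_nonneg _
    calc (N : ℝ) = Real.sqrt N ^ 2 := (Real.sq_sqrt (by positivity)).symm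
      _ ≤ (2 * k) ^ 2 := by nlinarith
  have hNle' : N ≤ (2 * k) ^ 2 := by exact_mod_cast hNle
  have : (2 * k + 1) * (2 * k + 1) ≤ N := hcard ▸ hle
  nlinarith
end

section
/- Let r ≥ 2 be an integer and consider the weights w(y) = exp(−(μ²/2)·(ĝ⊥·y)²)/∥y∥ on the rotated discrete half-ball b̃⁻_r (with unit guidance direction ĝ satisfying ĝ·e₂ < −1/r, so that the ray {kĝ : k = 1,…,r} intersects b̃⁻_r). Then as μ → ∞, the normalized weighted center of mass g*_μ = (Σ_{y∈b̃⁻_r} w_μ(y) y)/(Σ_{y∈b̃⁻_r} w_μ(y)) converges to a positive multiple of ĝ; i.e. the limiting transport direction of Guidefill is parallel to the guidance direction ĝ. -/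
open scoped Classical in
/-- Index set of the rotated discrete half-ball `b̃⁻_r`: lattice coefficients
`(n,m)` with `n² + m² ≤ r²` such that the point `n ĝ + m ĝ⊥` has second
coordinate `≤ -1`.  (Here `ĝ⊥ = (-ĝ₂, ĝ₁)`, so the second coordinate of
`n ĝ + m ĝ⊥` is `n ĝ₂ + m ĝ₁`.) -/
noncomputable def gfIdx (r : ℤ) (g : ℝ × ℝ) : Finset (ℤ × ℤ) :=
  (Finset.Icc (-r) r ×ˢ Finset.Icc (-r) r).filter
    (fun p => p.1 ^ 2 + p.2 ^ 2 ≤ r ^ 2 ∧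
      (p.1 : ℝ) * g.2 + (p.2 : ℝ) * g.1 ≤ -1)

/-- The point `n ĝ + m ĝ⊥` of the rotated lattice. -/
def rotPt (g : ℝ × ℝ) (p : ℤ × ℤ) : ℝ × ℝ :=
  ((p.1 : ℝ) * g.1 - (p.2 : ℝ) * g.2, (p.1 : ℝ) * g.2 + (p.2 : ℝ) * g.1)

/-- The coherence transport / Guidefill weight
`w_μ(y) = exp(-(μ²/2)·(ĝ⊥·y)²)/‖y‖`. -/
noncomputable def wt (g : ℝ × ℝ) (μ : ℝ) (y : ℝ × ℝ) : ℝ :=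
  Real.exp (-(μ ^ 2 / 2) * ((-g.2) * y.1 + g.1 * y.2) ^ 2) /
    Real.sqrt (y.1 ^ 2 + y.2 ^ 2)

/-- For the rotated half-ball `b̃⁻_r` of Guidefill with unit guidance
direction `ĝ` steep enough that `ĝ·e₂ < -1/r`, the normalized weighted center
of mass converges, as `μ → ∞`, to a positive multiple of `ĝ`: the limiting
transport direction is parallel to the guidance direction (no kinking). -/
theorem stmt_13 (r : ℤ) (hr : 2 ≤ r) (g : ℝ × ℝ)
    (hg : g.1 ^ 2 + g.2 ^ 2 = 1) (hsteep : g.2 < -1 / (r : ℝ)) :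
    ∃ c : ℝ, 0 < c ∧ Filter.Tendsto
      (fun μ : ℝ => (∑ p ∈ gfIdx r g, wt g μ (rotPt g p))⁻¹ •
        ∑ p ∈ gfIdx r g, wt g μ (rotPt g p) • rotPt g p)
      Filter.atTop (nhds (c • g)) := by
  classical
  have hrR : (0:ℝ) < (r:ℝ) := by exact_mod_cast lt_of_lt_of_le (by norm_num) hr
  have hg2neg : g.2 < 0 := lt_trans hsteep (div_neg_of_neg_of_pos (by norm_num) hrR)
  -- the weight expressed in lattice coordinates
  have hwt : ∀ (μ : ℝ) (p : ℤ × ℤ), wt g μ (rotPt g p)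
      = Real.exp (-(μ ^ 2 / 2) * (p.2 : ℝ) ^ 2) /
        Real.sqrt ((p.1 : ℝ) ^ 2 + (p.2 : ℝ) ^ 2) := by
    intro μ p
    have h1 : (-g.2) * ((p.1 : ℝ) * g.1 - (p.2 : ℝ) * g.2) +
        g.1 * ((p.1 : ℝ) * g.2 + (p.2 : ℝ) * g.1) = (p.2 : ℝ) := by
      linear_combination (p.2 : ℝ) * hg
    have h2 : ((p.1 : ℝ) * g.1 - (p.2 : ℝ) * g.2) ^ 2 +
        ((p.1 : ℝ) * g.2 + (p.2 : ℝ) * g.1) ^ 2 = (p.1 : ℝ) ^ 2 + (p.2 : ℝ) ^ 2 := by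
      linear_combination ((p.1 : ℝ) ^ 2 + (p.2 : ℝ) ^ 2) * hg
    simp only [wt, rotPt, h1, h2]
  -- limiting weights
  set L : ℤ × ℤ → ℝ := fun p =>
    if p.2 = 0 then 1 / Real.sqrt ((p.1 : ℝ) ^ 2 + (p.2 : ℝ) ^ 2) else 0 with hL
  have hterm : ∀ p : ℤ × ℤ, Filter.Tendsto (fun μ : ℝ => wt g μ (rotPt g p))
      Filter.atTop (nhds (L p)) := by
    intro p
    simp only [hwt]
    by_cases h0 : p.2 = 0
    · have hLp : L p = 1 / Real.sqrt ((p.1 : ℝ) ^ 2 + (p.2 : ℝ) ^ 2) := by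
        simp [hL, h0]
      rw [hLp]
      have heq : ∀ μ : ℝ, Real.exp (-(μ ^ 2 / 2) * ((p.2 : ℝ)) ^ 2) /
          Real.sqrt ((p.1 : ℝ) ^ 2 + (p.2 : ℝ) ^ 2)
          = 1 / Real.sqrt ((p.1 : ℝ) ^ 2 + (p.2 : ℝ) ^ 2) := by
        intro μ; rw [h0]; norm_num
      simp only [heq]
      exact tendsto_const_nhds
    · have hm : (0:ℝ) < (p.2 : ℝ) ^ 2 := by
        have : (p.2 : ℝ) ≠ 0 := by exact_mod_cast h0
        positivity
      have hb : Filter.Tendsto (fun μ : ℝ => -(μ ^ 2 / 2) * (p.2 : ℝ) ^ 2)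
          Filter.atTop Filter.atBot := by
        have heq : (fun μ : ℝ => -(μ ^ 2 / 2) * (p.2 : ℝ) ^ 2)
            = fun μ : ℝ => (-( (p.2 : ℝ) ^ 2 / 2)) * μ ^ 2 := by
          funext μ; ring
        rw [heq]
        exact Filter.Tendsto.const_mul_atTop_of_neg (by linarith)
          (Filter.tendsto_pow_atTop (two_ne_zero))
      have he : Filter.Tendsto (fun μ : ℝ => Real.exp (-(μ ^ 2 / 2) * (p.2 : ℝ) ^ 2))
          Filter.atTop (nhds 0) := Real.tendsto_exp_atBot.comp hb
      have := he.div_const (Real.sqrt ((p.1 : ℝ) ^ 2 + (p.2 : ℝ) ^ 2))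
      simp only [hL, if_neg h0, zero_div] at this ⊢
      exact this
  set S := gfIdx r g with hSdef
  -- (r, 0) belongs to the index set
  have hr0 : ((r, 0) : ℤ × ℤ) ∈ S := by
    simp only [hSdef, gfIdx, Finset.mem_filter, Finset.mem_product, Finset.mem_Icc]
    refine ⟨⟨⟨by linarith, le_refl r⟩, ⟨by linarith, by linarith⟩⟩, by norm_num, ?_⟩
    have h1 : (r : ℝ) * g.2 < (r : ℝ) * (-1 / (r : ℝ)) :=
      mul_lt_mul_of_pos_left hsteep hrR
    have h2 : (r : ℝ) * (-1 / (r : ℝ)) = -1 := by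
      field_simp
    push_cast
    linarith
  -- positivity of L on the special point
  have hLr0 : 0 < L ((r, 0) : ℤ × ℤ) := by
    simp only [hL, if_pos]
    have : (0:ℝ) < Real.sqrt ((r : ℝ) ^ 2 + ((0:ℤ) : ℝ) ^ 2) := by
      apply Real.sqrt_pos.2; push_cast; nlinarith
    positivity
  have hLnonneg : ∀ p : ℤ × ℤ, 0 ≤ L p := by
    intro p
    simp only [hL]
    split
    · positivity
    · exact le_rfl
  -- denominator limit
  set W : ℝ := ∑ p ∈ S, L p with hW
  have hWpos : 0 < W := by
    apply Finset.sum_pos' (fun p _ => hLnonneg p)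
    exact ⟨((r, 0) : ℤ × ℤ), hr0, hLr0⟩
  have hDen : Filter.Tendsto (fun μ : ℝ => ∑ p ∈ S, wt g μ (rotPt g p))
      Filter.atTop (nhds W) := by
    exact tendsto_finset_sum _ (fun p _ => hterm p)
  have hNum : Filter.Tendsto (fun μ : ℝ => ∑ p ∈ S, wt g μ (rotPt g p) • rotPt g p)
      Filter.atTop (nhds (∑ p ∈ S, L p • rotPt g p)) := by
    exact tendsto_finset_sum _ (fun p _ => (hterm p).smul_const (rotPt g p))
  -- compute the limiting numerator
  set T := S.filter (fun p => p.2 = 0) with hT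
  have hr0T : ((r, 0) : ℤ × ℤ) ∈ T := by
    rw [hT, Finset.mem_filter]; exact ⟨hr0, rfl⟩
  have hVterm : ∀ p ∈ T, L p • rotPt g p = g := by
    intro p hp
    simp only [hT, Finset.mem_filter] at hp
    obtain ⟨hpS, hp0⟩ := hp
    have hmem := hpS
    simp only [hSdef, gfIdx, Finset.mem_filter] at hmem
    have hineq : (p.1 : ℝ) * g.2 + (p.2 : ℝ) * g.1 ≤ -1 := hmem.2.2
    rw [hp0] at hineq
    simp only [Int.cast_zero, zero_mul, add_zero] at hineq
    have hn : 0 < (p.1 : ℝ) := by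
      by_contra h
      push_neg at h
      nlinarith
    have hz : ((p.2 : ℝ)) ^ 2 = 0 := by rw [hp0]; norm_num
    have hsqrt : Real.sqrt ((p.1 : ℝ) ^ 2 + (p.2 : ℝ) ^ 2) = (p.1 : ℝ) := by
      rw [hz, add_zero, Real.sqrt_sq (le_of_lt hn)]
    have hrot : rotPt g p = (p.1 : ℝ) • g := by
      rw [Prod.ext_iff]
      simp only [rotPt, hp0, Prod.smul_fst, Prod.smul_snd, smul_eq_mul, Int.cast_zero]
      constructor <;> ring
    simp only [hL, if_pos hp0, hsqrt, hrot, smul_smul]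
    rw [one_div, inv_mul_cancel₀ (ne_of_gt hn), one_smul]
  have hVsum : ∑ p ∈ S, L p • rotPt g p = (T.card : ℝ) • g := by
    rw [← Finset.sum_filter_add_sum_filter_not S (fun p => p.2 = 0)]
    have h2 : ∑ p ∈ S.filter (fun p => ¬ p.2 = 0), L p • rotPt g p = 0 := by
      apply Finset.sum_eq_zero
      intro p hp
      simp only [Finset.mem_filter] at hp
      simp [hL, hp.2]
    rw [h2, add_zero, Finset.sum_congr rfl hVterm, Finset.sum_const]
    rw [← Nat.cast_smul_eq_nsmul ℝ]
  have hcard : 0 < (T.card : ℝ) := by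
    have : 0 < T.card := Finset.card_pos.2 ⟨_, hr0T⟩
    exact_mod_cast this
  refine ⟨W⁻¹ * (T.card : ℝ), mul_pos (inv_pos.2 hWpos) hcard, ?_⟩
  have hlim := (hDen.inv₀ (ne_of_gt hWpos)).smul hNum
  rw [hVsum, smul_smul] at hlim
  exact hlim
end
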